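/- arXiv:1908.08798 — 2 statements merged into one kernel-verified Lean document; each statement's English description precedes it below -/
import Mathlib

section
/- Let X ⊆ 𝕊 and let φ ∈ B_♯^X(𝔻*). Suppose g is a Möbius transformation mapping 𝔻* bijectively onto itself such that φ(g(z)) g'(z)² = φ(z) for all z ∈ 𝔻*, and suppose there exists ξ ∈ 𝕊 with ξ ∉ X such that gⁿ(z) → ξ as n → ∞ for every z ∈ 𝔻*. Then φ is identically zero on 𝔻*. -/
open MeasureTheory Filter Topology ENNReal

noncomputable section

/-- The open unit disk in the complex plane. -/
def unitDisk : Set ℂ := {z : ℂ | ‖z‖ < 1}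

/-- The unit circle in the complex plane. -/
def unitCircle : Set ℂ := {z : ℂ | ‖z‖ = 1}

/-- The essential supremum of `|μ|` over a subset `s` of the plane. -/
def essBnd (μ : ℂ → ℂ) (s : Set ℂ) : ℝ≥0∞ :=
  essSup (fun z => (‖μ z‖₊ : ℝ≥0∞)) (volume.restrict s)

/-- Membership in `L^∞(𝔻)`: essentially bounded measurable function on the unit disk. -/
def MemLinf (μ : ℂ → ℂ) : Prop :=
  AEStronglyMeasurable μ (volume.restrict unitDisk) ∧ essBnd μ unitDisk ≠ ⊤

/-- `μ` vanishes at the boundary relative to `X ⊆ 𝕊`: for every `ε > 0` there is a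
compact `K ⊆ 𝔻 ∪ X` with `ess sup_{𝔻 \ K} |μ| < ε`. -/
def VanishRel (X : Set ℂ) (μ : ℂ → ℂ) : Prop :=
  ∀ ε : ℝ, 0 < ε → ∃ K : Set ℂ, IsCompact K ∧ K ⊆ unitDisk ∪ X ∧
    essBnd μ (unitDisk \ K) < ENNReal.ofReal ε
/-- The exterior of the closed unit disk, `𝔻* = {z : |z| > 1}`. -/
def extDisk : Set ℂ := {z : ℂ | 1 < ‖z‖}

/-- The weight `(|z|² − 1)²` defining the norm of `B(𝔻*)`. -/
def bweight (z : ℂ) : ℝ := (‖z‖ ^ 2 - 1) ^ 2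

/-- Membership in `B(𝔻*)`: holomorphic on `𝔻*` with finite norm
`‖φ‖_B = sup (|z|²−1)² |φ(z)|`. -/
def MemB (φ : ℂ → ℂ) : Prop :=
  DifferentiableOn ℂ φ extDisk ∧
    ∃ M : ℝ, ∀ z ∈ extDisk, bweight z * ‖φ z‖ ≤ M

/-- `φ` vanishes at the boundary relative to `X ⊆ 𝕊`: for every `ε > 0` there is a
compact `K* ⊆ 𝔻* ∪ X` with `sup_{𝔻* \ K*} (|z|²−1)² |φ(z)| < ε`. -/
def BVanishRel (X : Set ℂ) (φ : ℂ → ℂ) : Prop :=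
  ∀ ε : ℝ, 0 < ε → ∃ K : Set ℂ, IsCompact K ∧ K ⊆ extDisk ∪ X ∧
    ∀ z ∈ extDisk \ K, bweight z * ‖φ z‖ < ε
/-- The Möbius transformation `z ↦ (az + b)/(cz + d)`. -/
def mobius (a b c d : ℂ) : ℂ → ℂ := fun z => (a * z + b) / (c * z + d)

/-! An automorphism `g` of `𝔻*` is an isometry of the hyperbolic metric `|dz| / (|z|² − 1)`, so
`(|z|² − 1)² |φ z|` is constant along `g`-orbits when `φ` is `g`-invariant as a quadratic
differential. An orbit tending to `ξ ∉ X` eventually leaves every compact subset of `𝔻* ∪ X`,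
where this quantity is arbitrarily small, so it vanishes at every point whose orbit avoids the
pole of `g`. All but countably many points are of this kind, and `φ` is continuous.

The isometry property comes from the Hermitian form `|az + b|² − |cz + d|²`, which has the sign
of `|g z|² − 1`. Since `g` maps `𝔻*` bijectively onto `𝔻*`, away from the pole it is positive
on `𝔻*` and nonpositive on the closed unit disk, so by continuity it vanishes on `𝕊`; this forces
it to equal `(|a|² − |c|²)(|z|² − 1)` with `|a|² − |c|² = |ad − bc|`. -/

def mobiusForm (a b c d z : ℂ) : ℝ := ‖a * z + b‖ ^ 2 - ‖c * z + d‖ ^ 2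

lemma continuous_mobiusForm (a b c d : ℂ) : Continuous (mobiusForm a b c d) := by
  unfold mobiusForm
  fun_prop

lemma isOpen_extDisk : IsOpen extDisk := isOpen_lt continuous_const continuous_norm

lemma closure_extDisk : closure extDisk = {z : ℂ | 1 ≤ ‖z‖} := by
  have : extDisk = (Metric.closedBall (0 : ℂ) 1)ᶜ := by
    ext z
    simp [extDisk]
  rw [this, closure_compl, interior_closedBall' (0 : ℂ) 1]
  ext z
  simp

lemma bweight_pos {z : ℂ} (hz : z ∈ extDisk) : 0 < bweight z := by
  have : 1 < ‖z‖ := hz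
  have : 0 < ‖z‖ ^ 2 - 1 := by nlinarith
  unfold bweight
  positivity

lemma closure_subset_of_inter_dense_subset {X : Type*} [TopologicalSpace X] {U D C : Set X}
    (hU : IsOpen U) (hD : Dense D) (hC : IsClosed C) (h : U ∩ D ⊆ C) : closure U ⊆ C :=
  closure_minimal ((hD.open_subset_closure_inter hU).trans (closure_minimal h hC)) hC

section Mobius

variable {a b c d : ℂ}

lemma mobiusForm_eq_of_circle (h₁ : mobiusForm a b c d 1 = 0)
    (h₂ : mobiusForm a b c d (-1) = 0) (h₃ : mobiusForm a b c d Complex.I = 0) (z : ℂ) :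
    mobiusForm a b c d z = (‖a‖ ^ 2 - ‖c‖ ^ 2) * (‖z‖ ^ 2 - 1) := by
  simp only [mobiusForm, Complex.sq_norm, Complex.normSq_apply, Complex.add_re, Complex.add_im,
    Complex.mul_re, Complex.mul_im, Complex.one_re, Complex.one_im, Complex.neg_re,
    Complex.neg_im, Complex.I_re, Complex.I_im] at *
  linear_combination (1 / 2 + z.re / 2 - z.im / 2) * h₁ + (1 / 2 - z.re / 2 - z.im / 2) * h₂
    + z.im * h₃

/- With `U + iV = a b̄ − c d̄`, the determinant of the Hermitian form is
`−|ad − bc|² = (|a|² − |c|²)(|b|² − |d|²) − U² − V²`, and the three values on `𝕊` say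
`U = V = 0` and `|b|² − |d|² = −(|a|² − |c|²)`. -/
lemma norm_sq_det_of_circle (h₁ : mobiusForm a b c d 1 = 0)
    (h₂ : mobiusForm a b c d (-1) = 0) (h₃ : mobiusForm a b c d Complex.I = 0) :
    ‖a * d - b * c‖ ^ 2 = (‖a‖ ^ 2 - ‖c‖ ^ 2) ^ 2 := by
  set A := a.re * a.re + a.im * a.im - c.re * c.re - c.im * c.im
  set U := a.re * b.re + a.im * b.im - c.re * d.re - c.im * d.im
  set V := a.im * b.re - a.re * b.im - c.im * d.re + c.re * d.im
  simp only [mobiusForm, Complex.sq_norm, Complex.normSq_apply, Complex.add_re, Complex.add_im,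
    Complex.sub_re, Complex.sub_im, Complex.mul_re, Complex.mul_im, Complex.one_re,
    Complex.one_im, Complex.neg_re, Complex.neg_im, Complex.I_re, Complex.I_im] at *
  linear_combination (U / 4) * (h₁ - h₂) + V * ((h₁ + h₂) / 4 - h₃ / 2) - (A / 2) * (h₁ + h₂)

lemma mobius_injOn (hdet : a * d - b * c ≠ 0) :
    Set.InjOn (mobius a b c d) {z | c * z + d ≠ 0} := by
  intro z hz w hw h
  simp only [mobius] at h
  rw [div_eq_div_iff hz hw] at h
  have : (a * d - b * c) * (z - w) = 0 := by linear_combination h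
  exact sub_eq_zero.1 ((mul_eq_zero.1 this).resolve_left hdet)

lemma mobius_pole_subsingleton (hdet : a * d - b * c ≠ 0) :
    {z : ℂ | c * z + d = 0}.Subsingleton := by
  intro z (hz : c * z + d = 0) w (hw : c * w + d = 0)
  rcases eq_or_ne c 0 with rfl | hc
  · simp [by simpa using hz] at hdet
  · exact mul_left_cancel₀ hc (by linear_combination hz - hw)

lemma mobius_ne_div (hdet : a * d - b * c ≠ 0) {z : ℂ} (hz : c * z + d ≠ 0) (hc : c ≠ 0) :
    mobius a b c d z ≠ a / c := by
  rw [mobius, ne_eq, div_eq_div_iff hz hc]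
  exact fun h => hdet (by linear_combination -h)

lemma deriv_mobius {z : ℂ} (hz : c * z + d ≠ 0) :
    deriv (mobius a b c d) z = (a * d - b * c) / (c * z + d) ^ 2 := by
  have hnum : HasDerivAt (fun z => a * z + b) a z := by
    simpa using ((hasDerivAt_id z).const_mul a).add_const b
  have hden : HasDerivAt (fun z => c * z + d) c z := by
    simpa using ((hasDerivAt_id z).const_mul c).add_const d
  rw [show mobius a b c d = (fun z => a * z + b) / (fun z => c * z + d) from rfl,
    (hnum.div hden hz).deriv]
  ring

lemma norm_mobius_sq_sub_one {z : ℂ} (hz : c * z + d ≠ 0) :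
    ‖mobius a b c d z‖ ^ 2 - 1 = mobiusForm a b c d z / ‖c * z + d‖ ^ 2 := by
  have : 0 < ‖c * z + d‖ ^ 2 := by positivity
  rw [mobius, norm_div, div_pow, div_sub_one this.ne', mobiusForm]

lemma one_lt_norm_mobius_iff {z : ℂ} (hz : c * z + d ≠ 0) :
    1 < ‖mobius a b c d z‖ ↔ 0 < mobiusForm a b c d z := by
  have : 0 < ‖c * z + d‖ ^ 2 := by positivity
  rw [← one_lt_sq_iff₀ (norm_nonneg _), ← sub_pos, norm_mobius_sq_sub_one hz,
    div_pos_iff_of_pos_right this]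

section Automorphism

variable (hdet : a * d - b * c ≠ 0)
  (hbij : Set.BijOn (mobius a b c d) (extDisk \ {z : ℂ | c * z + d = 0}) (extDisk \ {a / c}))
include hbij

lemma mobiusForm_pos {z : ℂ} (hz : z ∈ extDisk) (hpole : c * z + d ≠ 0) :
    0 < mobiusForm a b c d z :=
  (one_lt_norm_mobius_iff hpole).1 (hbij.mapsTo ⟨hz, hpole⟩).1

include hdet

/- A point of the closed disk sent into `𝔻*` would share its image with a point of `𝔻*`. -/
lemma mobiusForm_nonpos {z : ℂ} (hz : ‖z‖ ≤ 1) (hpole : c * z + d ≠ 0) :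
    mobiusForm a b c d z ≤ 0 := by
  by_contra! hF
  have hgz : 1 < ‖mobius a b c d z‖ := (one_lt_norm_mobius_iff hpole).2 hF
  have hne : mobius a b c d z ≠ a / c := by
    rcases eq_or_ne c 0 with hc | hc
    · intro h
      rw [h, hc, _root_.div_zero, norm_zero] at hgz
      exact absurd hgz zero_lt_one.not_gt
    · exact mobius_ne_div hdet hpole hc
  obtain ⟨w, ⟨hw, hwpole⟩, hgw⟩ := hbij.surjOn ⟨hgz, hne⟩
  have : w = z := mobius_injOn hdet hwpole hpole hgw
  exact absurd hz (not_le.2 (this ▸ hw))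

lemma mobiusForm_nonneg_of_one_le_norm {z : ℂ} (hz : 1 ≤ ‖z‖) : 0 ≤ mobiusForm a b c d z := by
  refine closure_subset_of_inter_dense_subset isOpen_extDisk
    ((mobius_pole_subsingleton hdet).countable.dense_compl ℂ)
    (isClosed_le continuous_const (continuous_mobiusForm a b c d)) ?_ (by rwa [closure_extDisk])
  exact fun w hw => (mobiusForm_pos hbij hw.1 hw.2).le

lemma mobiusForm_nonpos_of_norm_le_one {z : ℂ} (hz : ‖z‖ ≤ 1) : mobiusForm a b c d z ≤ 0 := by
  refine closure_subset_of_inter_dense_subset Metric.isOpen_ball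
    ((mobius_pole_subsingleton hdet).countable.dense_compl ℂ)
    (isClosed_le (continuous_mobiusForm a b c d) continuous_const) ?_
    (by rwa [closure_ball (0 : ℂ) one_ne_zero, mem_closedBall_zero_iff])
  exact fun w hw => mobiusForm_nonpos hdet hbij (mem_ball_zero_iff.1 hw.1).le hw.2

lemma mobiusForm_eq_zero_of_norm_eq_one {z : ℂ} (hz : ‖z‖ = 1) : mobiusForm a b c d z = 0 :=
  le_antisymm (mobiusForm_nonpos_of_norm_le_one hdet hbij hz.le)
    (mobiusForm_nonneg_of_one_le_norm hdet hbij hz.ge)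

lemma mobiusForm_eq (z : ℂ) : mobiusForm a b c d z = (‖a‖ ^ 2 - ‖c‖ ^ 2) * (‖z‖ ^ 2 - 1) :=
  mobiusForm_eq_of_circle (mobiusForm_eq_zero_of_norm_eq_one hdet hbij (by simp))
    (mobiusForm_eq_zero_of_norm_eq_one hdet hbij (by simp))
    (mobiusForm_eq_zero_of_norm_eq_one hdet hbij Complex.norm_I) z

lemma norm_det_eq : ‖a * d - b * c‖ = ‖a‖ ^ 2 - ‖c‖ ^ 2 := by
  have hA : 0 ≤ ‖a‖ ^ 2 - ‖c‖ ^ 2 := by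
    have h2 := mobiusForm_nonneg_of_one_le_norm hdet hbij (z := 2) (by norm_num)
    rw [mobiusForm_eq hdet hbij] at h2
    norm_num at h2
    linarith
  refine (pow_left_inj₀ (norm_nonneg _) hA two_ne_zero).1 ?_
  exact norm_sq_det_of_circle (mobiusForm_eq_zero_of_norm_eq_one hdet hbij (by simp))
    (mobiusForm_eq_zero_of_norm_eq_one hdet hbij (by simp))
    (mobiusForm_eq_zero_of_norm_eq_one hdet hbij Complex.norm_I)

lemma bweight_mobius {z : ℂ} (hz : c * z + d ≠ 0) :
    bweight (mobius a b c d z) = bweight z * ‖deriv (mobius a b c d) z‖ ^ 2 := by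
  have : 0 < ‖c * z + d‖ := norm_pos_iff.2 hz
  rw [bweight, bweight, norm_mobius_sq_sub_one hz, mobiusForm_eq hdet hbij, deriv_mobius hz,
    norm_div, norm_pow, norm_det_eq hdet hbij]
  field_simp

end Automorphism

end Mobius

section Iterate

variable {α : Type*} {f : α → α}

lemma iterate_mem_and_eq_of_forall_lt {β : Type*} {s : Set α} {p : α → Prop} {Q : α → β}
    (hf : ∀ x ∈ s, p x → f x ∈ s ∧ Q (f x) = Q x) {x : α} (hx : x ∈ s) :
    ∀ n, (∀ k < n, p (f^[k] x)) → f^[n] x ∈ s ∧ Q (f^[n] x) = Q x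
  | 0, _ => ⟨hx, rfl⟩
  | n + 1, hp => by
    obtain ⟨hmem, hQ⟩ := iterate_mem_and_eq_of_forall_lt hf hx n fun k hk => hp k (by omega)
    obtain ⟨hmem', hQ'⟩ := hf _ hmem (hp n n.lt_succ_self)
    rw [Function.iterate_succ_apply']
    exact ⟨hmem', hQ'.trans hQ⟩

lemma injOn_iterate_of_injOn_compl {P : Set α} (hf : Set.InjOn f Pᶜ) :
    ∀ n, Set.InjOn f^[n] {x | ∀ k < n, f^[k] x ∉ P}
  | 0 => fun _ _ _ _ h => h
  | n + 1 => by
    intro x hx y hy h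
    have shift : ∀ z ∈ {x | ∀ k < n + 1, f^[k] x ∉ P}, f z ∈ {x | ∀ k < n, f^[k] x ∉ P} :=
      fun z hz k hk => by simpa only [← Function.iterate_succ_apply] using hz (k + 1) (by omega)
    exact hf (hx 0 n.succ_pos) (hy 0 n.succ_pos)
      (injOn_iterate_of_injOn_compl hf n (shift x hx) (shift y hy) h)

lemma countable_setOf_exists_iterate_mem {P : Set α} (hf : Set.InjOn f Pᶜ) (hP : P.Countable) :
    {x | ∃ n, f^[n] x ∈ P}.Countable := by
  classical
  have hcover : {x | ∃ n, f^[n] x ∈ P} ⊆ ⋃ n, {x | ∀ k < n, f^[k] x ∉ P} ∩ (f^[n]) ⁻¹' P :=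
    fun x hx => Set.mem_iUnion.2 ⟨Nat.find hx, fun k hk => Nat.find_min hx hk, Nat.find_spec hx⟩
  refine (Set.countable_iUnion fun n => ?_).mono hcover
  exact (Set.mapsTo_preimage _ P).mono_left Set.inter_subset_right |>.countable_of_injOn
    ((injOn_iterate_of_injOn_compl hf n).mono Set.inter_subset_left) hP

end Iterate

section Vanishing

variable {X : Set ℂ} {φ : ℂ → ℂ} {ξ : ℂ} {ι : Type*} {l : Filter ι} {u : ι → ℂ}

lemma BVanishRel.tendsto_zero (hvan : BVanishRel X φ) (hξ : ξ ∈ unitCircle) (hξX : ξ ∉ X)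
    (hu : Tendsto u l (𝓝 ξ)) (hmem : ∀ᶠ i in l, u i ∈ extDisk) :
    Tendsto (fun i => bweight (u i) * ‖φ (u i)‖) l (𝓝 0) := by
  rw [Metric.tendsto_nhds]
  intro ε hε
  obtain ⟨K, hK, hKsub, hKbound⟩ := hvan ε hε
  have hξK : ξ ∉ K := fun h => (hKsub h).elim (fun h' => (h' : 1 < ‖ξ‖).ne' hξ) hξX
  filter_upwards [hu (hK.isClosed.isOpen_compl.mem_nhds hξK), hmem] with i hiK hi
  rw [Real.dist_0_eq_abs, abs_of_nonneg (mul_nonneg (bweight_pos hi).le (norm_nonneg _))]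
  exact hKbound _ ⟨hi, hiK⟩

lemma BVanishRel.eq_zero_of_invariant_along [l.NeBot] (hvan : BVanishRel X φ)
    (hξ : ξ ∈ unitCircle) (hξX : ξ ∉ X) (hu : Tendsto u l (𝓝 ξ)) (hmem : ∀ i, u i ∈ extDisk)
    {z : ℂ} (hz : z ∈ extDisk) (hinv : ∀ i, bweight (u i) * ‖φ (u i)‖ = bweight z * ‖φ z‖) :
    φ z = 0 := by
  have hlim := hvan.tendsto_zero hξ hξX hu (Eventually.of_forall hmem)
  simp only [hinv] at hlim
  have h0 : bweight z * ‖φ z‖ = 0 := tendsto_nhds_unique tendsto_const_nhds hlim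
  simpa [(bweight_pos hz).ne'] using h0

end Vanishing

theorem invariant_vanish_eq_zero_general (X : Set ℂ) (a b c d : ℂ)
    (hdet : a * d - b * c ≠ 0)
    (hbij : Set.BijOn (mobius a b c d) (extDisk \ {z : ℂ | c * z + d = 0})
      (extDisk \ {a / c}))
    (φ : ℂ → ℂ) (hφ : MemB φ) (hvan : BVanishRel X φ)
    (hinv : ∀ z ∈ extDisk, c * z + d ≠ 0 →
      φ (mobius a b c d z) * (deriv (mobius a b c d) z) ^ 2 = φ z)
    (ξ : ℂ) (hξ : ξ ∈ unitCircle) (hξX : ξ ∉ X)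
    (horb : ∀ w ∈ extDisk, Tendsto (fun n => (mobius a b c d)^[n] w) atTop (𝓝 ξ)) :
    ∀ z ∈ extDisk, φ z = 0 := by
  set g := mobius a b c d
  set P : Set ℂ := {z | c * z + d = 0}
  have hstep : ∀ z ∈ extDisk, z ∉ P →
      g z ∈ extDisk ∧ bweight (g z) * ‖φ (g z)‖ = bweight z * ‖φ z‖ := fun z hz hzP => by
    refine ⟨(hbij.mapsTo ⟨hz, hzP⟩).1, ?_⟩
    rw [bweight_mobius hdet hbij hzP, ← hinv z hz hzP, norm_mul, norm_pow]
    ring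
  have hclean : Set.EqOn φ 0 (extDisk ∩ {z | ∃ n, g^[n] z ∈ P}ᶜ) := by
    rintro z ⟨hz, hzP⟩
    have horbit n := iterate_mem_and_eq_of_forall_lt (p := (· ∉ P))
      (Q := fun z => bweight z * ‖φ z‖) hstep hz n fun k _ hk => hzP ⟨k, hk⟩
    exact hvan.eq_zero_of_invariant_along hξ hξX (horb z hz) (fun n => (horbit n).1) hz
      (fun n => (horbit n).2)
  have hdense : Dense {z | ∃ n, g^[n] z ∈ P}ᶜ :=
    (countable_setOf_exists_iterate_mem (mobius_injOn hdet)
      (mobius_pole_subsingleton hdet).countable).dense_compl ℂ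
  exact fun z hz => hclean.of_subset_closure hφ.1.continuousOn continuousOn_const
    Set.inter_subset_left (hdense.open_subset_closure_inter isOpen_extDisk) hz

/-- If `φ ∈ B_♯^X(𝔻*)` is invariant under a Möbius automorphism `g` of
`𝔻*` whose iterates converge on all of `𝔻*` to a point `ξ ∈ 𝕊 \ X`, then `φ ≡ 0`. -/
theorem invariant_vanish_eq_zero (X : Set ℂ) (hX : X ⊆ unitCircle) (a b c d : ℂ)
    (hdet : a * d - b * c ≠ 0)
    (hbij : Set.BijOn (mobius a b c d) (extDisk \ {z : ℂ | c * z + d = 0})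
      (extDisk \ {a / c}))
    (φ : ℂ → ℂ) (hφ : MemB φ) (hvan : BVanishRel X φ)
    (hinv : ∀ z ∈ extDisk, c * z + d ≠ 0 →
      φ (mobius a b c d z) * (deriv (mobius a b c d) z) ^ 2 = φ z)
    (ξ : ℂ) (hξ : ξ ∈ unitCircle) (hξX : ξ ∉ X)
    (horb : ∀ w ∈ extDisk, Tendsto (fun n => (mobius a b c d)^[n] w) atTop (𝓝 ξ)) :
    ∀ z ∈ extDisk, φ z = 0 :=
  invariant_vanish_eq_zero_general X a b c d hdet hbij φ hφ hvan hinv ξ hξ hξX horb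
end
end

section
/- Let (X_n)_{n ∈ ℕ} be a strictly increasing sequence of subsets of the unit circle 𝕊 (X_n ⊊ X_{n+1} for all n) and set X = ⋃_{n=1}^{∞} X_n. Then the increasing union ⋃_{n=1}^{∞} B_♯^{X_n}(𝔻*) is not a closed subset of B(𝔻*) with respect to the norm ‖·‖_B; in particular, ⋃_{n=1}^{∞} B_♯^{X_n}(𝔻*) is strictly contained in B_♯^X(𝔻*). -/
open MeasureTheory Filter Topology ENNReal

noncomputable section

/-!
Pick `ξₙ ∈ Xₙ₊₁ \ Xₙ` and put `gξ(z) = 1 / ((z - ξ)² z³)`, whose weighted size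
`(|z|² - 1)² |gξ(z)|` is at most `4 / (C |z|)` outside the cone `|z - ξ| < C (|z| - 1)`;
hence `gξ` vanishes at the boundary relative to `{ξ}`. The partial sums of
`φ = ∑ₙ 8⁻ⁿ gξₙ` lie in `B_♯^{Xₙ}` and converge to `φ` geometrically fast in `‖·‖_B`, so `φ`
lies in the closed space `B_♯^X`. But `φ ∉ B_♯^{Xₙ}`: along the radius ending at `ξₙ`, the
earlier terms tend to zero in weighted size, the `n`-th term stays above `8⁻ⁿ`, and the tail
is at most `(4/7) 8⁻ⁿ`.
-/

def poleAt (ξ z : ℂ) : ℂ := ((z - ξ) ^ 2 * z ^ 3)⁻¹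

lemma bweight_nonneg (z : ℂ) : 0 ≤ bweight z := sq_nonneg _

lemma bweight_eq_mul (z : ℂ) : bweight z = (‖z‖ - 1) ^ 2 * (‖z‖ + 1) ^ 2 := by
  unfold bweight; ring

lemma norm_poleAt (ξ z : ℂ) : ‖poleAt ξ z‖ = (‖z - ξ‖ ^ 2 * ‖z‖ ^ 3)⁻¹ := by
  simp [poleAt]

lemma norm_sub_one_le_norm_sub {ξ : ℂ} (hξ : ‖ξ‖ ≤ 1) (z : ℂ) : ‖z‖ - 1 ≤ ‖z - ξ‖ := by
  linarith [norm_sub_norm_le z ξ]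

lemma norm_poleAt_le {ξ z : ℂ} (hξ : ‖ξ‖ ≤ 1) (hz : z ∈ extDisk) :
    ‖poleAt ξ z‖ ≤ ((‖z‖ - 1) ^ 2)⁻¹ := by
  have hz' : 1 < ‖z‖ := hz
  have hdist := norm_sub_one_le_norm_sub hξ z
  rw [norm_poleAt]
  gcongr
  calc (‖z‖ - 1) ^ 2 ≤ ‖z - ξ‖ ^ 2 := by gcongr
    _ ≤ ‖z - ξ‖ ^ 2 * ‖z‖ ^ 3 := le_mul_of_one_le_right (by positivity) (one_le_pow₀ hz'.le)

lemma bweight_mul_norm_poleAt_le {ξ z : ℂ} {C : ℝ} (hz : z ∈ extDisk) (hC : 1 ≤ C)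
    (hcone : C * (‖z‖ - 1) ≤ ‖z - ξ‖) :
    bweight z * ‖poleAt ξ z‖ ≤ 4 / (C * ‖z‖) := by
  have hz' : 1 < ‖z‖ := hz
  have hcone2 : C ^ 2 * (‖z‖ - 1) ^ 2 ≤ ‖z - ξ‖ ^ 2 := by
    rw [← mul_pow]; gcongr
  have hpos : 0 < ‖z - ξ‖ := lt_of_lt_of_le (by nlinarith) hcone
  rw [norm_poleAt, bweight_eq_mul, ← div_eq_mul_inv, div_le_div_iff₀ (by positivity) (by positivity)]
  calc (‖z‖ - 1) ^ 2 * (‖z‖ + 1) ^ 2 * (C * ‖z‖)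
      ≤ (C ^ 2 * (‖z‖ - 1) ^ 2) * (4 * ‖z‖ ^ 3) := by
        have : (‖z‖ + 1) ^ 2 ≤ 4 * ‖z‖ ^ 2 := by nlinarith
        have : C ≤ C ^ 2 := by nlinarith
        have : 0 ≤ (‖z‖ - 1) ^ 2 := sq_nonneg _
        calc _ = (‖z‖ - 1) ^ 2 * ‖z‖ * ((‖z‖ + 1) ^ 2 * C) := by ring
          _ ≤ (‖z‖ - 1) ^ 2 * ‖z‖ * (4 * ‖z‖ ^ 2 * C ^ 2) := by gcongr
          _ = _ := by ring
    _ ≤ ‖z - ξ‖ ^ 2 * (4 * ‖z‖ ^ 3) := by gcongr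
    _ = 4 * (‖z - ξ‖ ^ 2 * ‖z‖ ^ 3) := by ring

lemma bweight_mul_norm_poleAt_le_four {ξ z : ℂ} (hξ : ‖ξ‖ ≤ 1) (hz : z ∈ extDisk) :
    bweight z * ‖poleAt ξ z‖ ≤ 4 := by
  have hz' : 1 < ‖z‖ := hz
  calc bweight z * ‖poleAt ξ z‖ ≤ 4 / (1 * ‖z‖) :=
        bweight_mul_norm_poleAt_le hz le_rfl (by simpa using norm_sub_one_le_norm_sub hξ z)
    _ ≤ 4 := by rw [one_mul, div_le_iff₀ (by positivity)]; linarith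

lemma one_le_bweight_mul_norm_poleAt_radial {ξ : ℂ} (hξ : ‖ξ‖ = 1) {t : ℝ} (ht : t ∈ Set.Ioc 0 1) :
    1 ≤ bweight (((1 + t : ℝ) : ℂ) * ξ) * ‖poleAt ξ (((1 + t : ℝ) : ℂ) * ξ)‖ := by
  obtain ⟨ht0, ht1⟩ := ht
  have hnorm : ‖((1 + t : ℝ) : ℂ) * ξ‖ = 1 + t := by
    rw [norm_mul, hξ, Complex.norm_real, Real.norm_of_nonneg (by linarith), mul_one]
  have hsub : ‖((1 + t : ℝ) : ℂ) * ξ - ξ‖ = t := by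
    rw [show ((1 + t : ℝ) : ℂ) * ξ - ξ = (t : ℂ) * ξ by push_cast; ring, norm_mul, hξ,
      Complex.norm_real, Real.norm_of_nonneg ht0.le, mul_one]
  rw [norm_poleAt, hsub, bweight_eq_mul, hnorm, ← div_eq_mul_inv, le_div_iff₀ (by positivity)]
  nlinarith [mul_pos ht0 ht0, mul_pos (mul_pos ht0 ht0) ht0]

lemma differentiableOn_poleAt {ξ : ℂ} (hξ : ‖ξ‖ ≤ 1) : DifferentiableOn ℂ (poleAt ξ) extDisk := by
  refine ((((differentiable_id.sub_const ξ).pow 2).mul (differentiable_id.pow 3)).differentiableOn).inv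
    fun z hz => ?_
  have hz' : 1 < ‖z‖ := hz
  have hzξ : z - ξ ≠ 0 := fun h => by rw [sub_eq_zero] at h; rw [h] at hz'; linarith
  have hz0 : z ≠ 0 := by rintro rfl; norm_num at hz'
  exact mul_ne_zero (pow_ne_zero _ hzξ) (pow_ne_zero _ hz0)

namespace BVanishRel

variable {X : Set ℂ} {f g : ℂ → ℂ}

lemma mono {Y : Set ℂ} (hf : BVanishRel X f) (hXY : X ⊆ Y) : BVanishRel Y f := fun ε hε =>
  let ⟨K, hK, hKX, hfK⟩ := hf ε hε
  ⟨K, hK, hKX.trans (Set.union_subset_union_right _ hXY), hfK⟩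

lemma zero : BVanishRel X fun _ => 0 := fun ε hε =>
  ⟨∅, isCompact_empty, Set.empty_subset _, fun z _ => by simpa using hε⟩

lemma add (hf : BVanishRel X f) (hg : BVanishRel X g) : BVanishRel X fun z => f z + g z := by
  intro ε hε
  obtain ⟨K, hK, hKX, hfK⟩ := hf (ε / 2) (by linarith)
  obtain ⟨L, hL, hLX, hgL⟩ := hg (ε / 2) (by linarith)
  refine ⟨K ∪ L, hK.union hL, Set.union_subset hKX hLX, fun z ⟨hz, hzKL⟩ => ?_⟩
  have hfz := hfK z ⟨hz, fun h => hzKL (Or.inl h)⟩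
  have hgz := hgL z ⟨hz, fun h => hzKL (Or.inr h)⟩
  calc bweight z * ‖f z + g z‖ ≤ bweight z * ‖f z‖ + bweight z * ‖g z‖ := by
        rw [← mul_add]; exact mul_le_mul_of_nonneg_left (norm_add_le _ _) (bweight_nonneg z)
    _ < ε := by linarith

lemma const_mul (c : ℂ) (hf : BVanishRel X f) : BVanishRel X fun z => c * f z := by
  intro ε hε
  obtain ⟨K, hK, hKX, hfK⟩ := hf (ε / (‖c‖ + 1)) (by positivity)
  refine ⟨K, hK, hKX, fun z hz => ?_⟩
  have hfz := hfK z hz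
  rw [lt_div_iff₀ (by positivity)] at hfz
  calc bweight z * ‖c * f z‖ = ‖c‖ * (bweight z * ‖f z‖) := by rw [norm_mul]; ring
    _ ≤ (‖c‖ + 1) * (bweight z * ‖f z‖) := by
        gcongr; exact mul_nonneg (bweight_nonneg z) (norm_nonneg _); linarith
    _ < ε := by linarith

lemma sub (hf : BVanishRel X f) (hg : BVanishRel X g) : BVanishRel X fun z => f z - g z := by
  simpa [sub_eq_add_neg] using hf.add (hg.const_mul (-1))

lemma sum {ι : Type*} (s : Finset ι) {F : ι → ℂ → ℂ} (hF : ∀ i ∈ s, BVanishRel X (F i)) :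
    BVanishRel X fun z => ∑ i ∈ s, F i z := by
  classical
  induction s using Finset.induction_on with
  | empty => simpa using zero
  | insert i s hi ih =>
    simp only [Finset.sum_insert hi]
    exact (hF i (s.mem_insert_self i)).add (ih fun j hj => hF j (Finset.mem_insert_of_mem hj))

lemma of_approx (h : ∀ ε > 0, ∃ f, BVanishRel X f ∧ ∀ z ∈ extDisk, bweight z * ‖g z - f z‖ < ε) :
    BVanishRel X g := by
  intro ε hε
  obtain ⟨f, hf, hfg⟩ := h (ε / 2) (by linarith)
  obtain ⟨K, hK, hKX, hfK⟩ := hf (ε / 2) (by linarith)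
  refine ⟨K, hK, hKX, fun z hz => ?_⟩
  calc bweight z * ‖g z‖ ≤ bweight z * ‖f z‖ + bweight z * ‖g z - f z‖ := by
        rw [← mul_add]
        exact mul_le_mul_of_nonneg_left (norm_le_norm_add_norm_sub' _ _) (bweight_nonneg z)
    _ < ε := by linarith [hfK z hz, hfg z hz.1]

lemma eventually_lt (hf : BVanishRel X f) {ζ : ℂ} (hζ : ζ ∉ extDisk ∪ X) {ε : ℝ} (hε : 0 < ε) :
    ∀ᶠ z in 𝓝 ζ, z ∈ extDisk → bweight z * ‖f z‖ < ε := by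
  obtain ⟨K, hK, hKX, hfK⟩ := hf ε hε
  filter_upwards [hK.isClosed.isOpen_compl.mem_nhds fun h => hζ (hKX h)] with z hzK hz
  exact hfK z ⟨hz, hzK⟩

end BVanishRel

section PoleSeries

variable {ξ : ℕ → ℂ}

variable (ξ) in
def poleTerm (m : ℕ) (z : ℂ) : ℂ := (8 : ℂ)⁻¹ ^ m * poleAt (ξ m) z

variable (ξ) in
def poleSeries (z : ℂ) : ℂ := ∑' m, poleTerm ξ m z

variable (ξ) in
def polePartialSum (k : ℕ) (z : ℂ) : ℂ := ∑ m ∈ Finset.range k, poleTerm ξ m z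

lemma norm_poleTerm (m : ℕ) (z : ℂ) : ‖poleTerm ξ m z‖ = (8 : ℝ)⁻¹ ^ m * ‖poleAt (ξ m) z‖ := by
  simp [poleTerm]

lemma bweight_mul_norm_poleTerm_le (hξ : ∀ m, ‖ξ m‖ ≤ 1) (m : ℕ) {z : ℂ} (hz : z ∈ extDisk) :
    bweight z * ‖poleTerm ξ m z‖ ≤ 4 * (8 : ℝ)⁻¹ ^ m := by
  rw [norm_poleTerm, mul_left_comm, mul_comm 4]
  gcongr
  exact bweight_mul_norm_poleAt_le_four (hξ m) hz

lemma summable_norm_poleTerm (hξ : ∀ m, ‖ξ m‖ ≤ 1) {z : ℂ} (hz : z ∈ extDisk) :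
    Summable fun m => ‖poleTerm ξ m z‖ := by
  refine .of_nonneg_of_le (fun m => norm_nonneg _) (fun m => ?_)
    ((summable_geometric_of_lt_one (r := (8 : ℝ)⁻¹) (by norm_num) (by norm_num)).mul_right ((‖z‖ - 1) ^ 2)⁻¹)
  rw [norm_poleTerm]
  gcongr
  exact norm_poleAt_le (hξ m) hz

lemma bweight_mul_norm_poleSeries_sub_le (hξ : ∀ m, ‖ξ m‖ ≤ 1) (k : ℕ) {z : ℂ}
    (hz : z ∈ extDisk) :
    bweight z * ‖poleSeries ξ z - polePartialSum ξ k z‖ ≤ 32 / 7 * (8 : ℝ)⁻¹ ^ k := by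
  have htail : poleSeries ξ z - polePartialSum ξ k z = ∑' m, poleTerm ξ (m + k) z := by
    rw [poleSeries, polePartialSum,
      ← (summable_norm_poleTerm hξ hz).of_norm.sum_add_tsum_nat_add k, add_sub_cancel_left]
  have hgeom : HasSum (fun m : ℕ => 4 * (8 : ℝ)⁻¹ ^ k * (8 : ℝ)⁻¹ ^ m) (32 / 7 * (8 : ℝ)⁻¹ ^ k) := by
    rw [show (32 / 7 : ℝ) * (8 : ℝ)⁻¹ ^ k = 4 * (8 : ℝ)⁻¹ ^ k * (1 - (8 : ℝ)⁻¹)⁻¹ by norm_num; ring]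
    exact (hasSum_geometric_of_lt_one (by norm_num) (by norm_num)).mul_left _
  rw [htail, ← Real.norm_of_nonneg (bweight_nonneg z), ← Complex.norm_real, ← norm_mul,
    ← tsum_mul_left]
  refine tsum_of_norm_bounded hgeom fun m => ?_
  rw [norm_mul, Complex.norm_real, Real.norm_of_nonneg (bweight_nonneg z), mul_assoc, ← pow_add,
    add_comm k]
  exact bweight_mul_norm_poleTerm_le hξ (m + k) hz

lemma bweight_mul_norm_poleSeries_le (hξ : ∀ m, ‖ξ m‖ ≤ 1) {z : ℂ} (hz : z ∈ extDisk) :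
    bweight z * ‖poleSeries ξ z‖ ≤ 32 / 7 := by
  simpa [polePartialSum] using bweight_mul_norm_poleSeries_sub_le hξ 0 hz

lemma differentiableOn_poleSeries (hξ : ∀ m, ‖ξ m‖ ≤ 1) :
    DifferentiableOn ℂ (poleSeries ξ) extDisk := by
  intro z hz
  have hz' : 1 < ‖z‖ := hz
  set r := (‖z‖ - 1) / 2
  have hr : 0 < r := by simp only [r]; linarith
  set U := {w : ℂ | 1 + r < ‖w‖}
  have hUext : U ⊆ extDisk := fun w (hw : 1 + r < ‖w‖) => show 1 < ‖w‖ by linarith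
  have hU : IsOpen U := isOpen_lt continuous_const continuous_norm
  have hdiff : DifferentiableOn ℂ (poleSeries ξ) U := by
    refine Complex.differentiableOn_tsum_of_summable_norm
      ((summable_geometric_of_lt_one (r := (8 : ℝ)⁻¹) (by norm_num) (by norm_num)).mul_right (r ^ 2)⁻¹)
      (fun m => ((differentiableOn_poleAt (hξ m)).const_mul _).mono hUext) hU fun m w hw => ?_
    have hw' : 1 + r < ‖w‖ := hw
    rw [norm_poleTerm]
    gcongr
    calc ‖poleAt (ξ m) w‖ ≤ ((‖w‖ - 1) ^ 2)⁻¹ := norm_poleAt_le (hξ m) (hUext hw)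
      _ ≤ (r ^ 2)⁻¹ := by gcongr; linarith
  have hzU : z ∈ U := show 1 + r < ‖z‖ by simp only [r]; linarith
  exact (hdiff.differentiableAt (hU.mem_nhds hzU)).differentiableWithinAt

lemma memB_poleSeries (hξ : ∀ m, ‖ξ m‖ ≤ 1) : MemB (poleSeries ξ) :=
  ⟨differentiableOn_poleSeries hξ, 32 / 7, fun _ hz => bweight_mul_norm_poleSeries_le hξ hz⟩

lemma memB_polePartialSum (hξ : ∀ m, ‖ξ m‖ ≤ 1) (k : ℕ) : MemB (polePartialSum ξ k) := by
  refine ⟨DifferentiableOn.fun_sum fun m _ => (differentiableOn_poleAt (hξ m)).const_mul _,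
    32 / 7 + 32 / 7, fun z hz => ?_⟩
  have hk : (8 : ℝ)⁻¹ ^ k ≤ 1 := pow_le_one₀ (by norm_num) (by norm_num)
  calc bweight z * ‖polePartialSum ξ k z‖
      ≤ bweight z * ‖poleSeries ξ z‖ + bweight z * ‖poleSeries ξ z - polePartialSum ξ k z‖ := by
        rw [← mul_add]
        exact mul_le_mul_of_nonneg_left (norm_le_norm_add_norm_sub _ _) (bweight_nonneg z)
    _ ≤ 32 / 7 + 32 / 7 := by
        gcongr
        · exact bweight_mul_norm_poleSeries_le hξ hz
        · nlinarith [bweight_mul_norm_poleSeries_sub_le hξ k hz]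

lemma exists_bweight_mul_norm_polePartialSum_sub_lt (hξ : ∀ m, ‖ξ m‖ ≤ 1) {ε : ℝ} (hε : 0 < ε) :
    ∃ N, ∀ k ≥ N, ∀ z ∈ extDisk, bweight z * ‖polePartialSum ξ k z - poleSeries ξ z‖ < ε := by
  obtain ⟨N, hN⟩ := exists_pow_lt_of_lt_one (show 0 < 7 / 32 * ε by positivity)
    (show (8 : ℝ)⁻¹ < 1 by norm_num)
  refine ⟨N, fun k hk z hz => ?_⟩
  have hkN : (8 : ℝ)⁻¹ ^ k ≤ (8 : ℝ)⁻¹ ^ N := pow_le_pow_of_le_one (by norm_num) (by norm_num) hk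
  rw [norm_sub_rev]
  linarith [bweight_mul_norm_poleSeries_sub_le hξ k hz]

end PoleSeries

section PoleSeriesVanishing

variable {ξ : ℕ → ℂ} {X : Set ℂ}

lemma bVanishRel_poleAt {ξ : ℂ} (hξ : ‖ξ‖ ≤ 1) : BVanishRel {ξ} (poleAt ξ) := by
  intro ε hε
  set M := 4 / ε + 1
  have hM : 1 ≤ M := by simp only [M]; linarith [div_pos four_pos hε]
  have hMε : 4 / M < ε := by
    rw [div_lt_iff₀ (by positivity)]
    simp only [M]
    rw [mul_add, mul_div_cancel₀ _ hε.ne']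
    linarith
  refine ⟨{z | ‖z‖ ≤ M ∧ ‖z - ξ‖ ≤ M * (‖z‖ - 1)}, ?_, ?_, ?_⟩
  · refine Metric.isCompact_of_isClosed_isBounded
      ((isClosed_le continuous_norm continuous_const).inter
        (isClosed_le (continuous_norm.comp (continuous_id.sub continuous_const))
          (continuous_const.mul (continuous_norm.sub continuous_const))))
      ((Metric.isBounded_closedBall (x := 0) (r := M)).subset fun z hz => ?_)
    simpa using hz.1
  · rintro z ⟨-, hzξ⟩
    by_cases hz : 1 < ‖z‖
    · exact Or.inl hz
    · have : ‖z - ξ‖ ≤ 0 := hzξ.trans (mul_nonpos_of_nonneg_of_nonpos (by linarith) (by linarith))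
      exact Or.inr (sub_eq_zero.1 (norm_le_zero_iff.1 this))
  · rintro z ⟨hz, hzK⟩
    have hz' : 1 < ‖z‖ := hz
    refine lt_of_le_of_lt ?_ hMε
    by_cases hzM : ‖z‖ ≤ M
    · have hcone : M * (‖z‖ - 1) ≤ ‖z - ξ‖ := (not_le.1 fun h => hzK ⟨hzM, h⟩).le
      calc bweight z * ‖poleAt ξ z‖ ≤ 4 / (M * ‖z‖) := bweight_mul_norm_poleAt_le hz hM hcone
        _ ≤ 4 / M := by gcongr; nlinarith
    · calc bweight z * ‖poleAt ξ z‖ ≤ 4 / (1 * ‖z‖) :=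
            bweight_mul_norm_poleAt_le hz le_rfl (by simpa using norm_sub_one_le_norm_sub hξ z)
        _ ≤ 4 / M := by rw [one_mul]; gcongr; linarith

lemma bVanishRel_polePartialSum (hξ : ∀ m, ‖ξ m‖ ≤ 1) {k : ℕ} (hX : ∀ m < k, ξ m ∈ X) :
    BVanishRel X (polePartialSum ξ k) :=
  BVanishRel.sum _ fun m hm => ((bVanishRel_poleAt (hξ m)).const_mul _).mono
    (Set.singleton_subset_iff.2 (hX m (Finset.mem_range.1 hm)))

lemma bVanishRel_poleSeries (hξ : ∀ m, ‖ξ m‖ ≤ 1) (hX : ∀ m, ξ m ∈ X) :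
    BVanishRel X (poleSeries ξ) :=
  BVanishRel.of_approx fun ε hε =>
    let ⟨N, hN⟩ := exists_bweight_mul_norm_polePartialSum_sub_lt hξ hε
    ⟨polePartialSum ξ N, bVanishRel_polePartialSum hξ fun m _ => hX m,
      fun z hz => by rw [norm_sub_rev]; exact hN N le_rfl z hz⟩

lemma not_bVanishRel_poleSeries (hξ : ∀ m, ‖ξ m‖ ≤ 1) {n : ℕ} (hξn : ‖ξ n‖ = 1)
    (hnX : ξ n ∉ X) (hX : ∀ m < n, ξ m ∈ X) : ¬ BVanishRel X (poleSeries ξ) := by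
  intro hφ
  have hψ := hφ.sub (bVanishRel_polePartialSum hξ hX)
  have hξn' : ξ n ∉ extDisk ∪ X := by
    rintro (h | h)
    · exact (h : 1 < ‖ξ n‖).ne' hξn
    · exact hnX h
  have hradial : Tendsto (fun t : ℝ => ((1 + t : ℝ) : ℂ) * ξ n) (𝓝[>] 0) (𝓝 (ξ n)) := by
    refine Tendsto.mono_left ?_ nhdsWithin_le_nhds
    have hcont : Continuous fun t : ℝ => ((1 + t : ℝ) : ℂ) * ξ n := by fun_prop
    simpa using hcont.tendsto 0
  obtain ⟨t, hsmall, ht⟩ := ((hradial.eventually (hψ.eventually_lt hξn'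
    (show 0 < 3 / 7 * (8 : ℝ)⁻¹ ^ n by positivity))).and (Ioc_mem_nhdsGT one_pos)).exists
  set z := ((1 + t : ℝ) : ℂ) * ξ n
  have hz : z ∈ extDisk := show 1 < ‖z‖ by
    rw [norm_mul, hξn, Complex.norm_real, Real.norm_of_nonneg (by linarith [ht.1])]; linarith [ht.1]
  have hterm : (8 : ℝ)⁻¹ ^ n ≤ bweight z * ‖poleTerm ξ n z‖ := by
    rw [norm_poleTerm, mul_left_comm]
    exact le_mul_of_one_le_right (by positivity) (one_le_bweight_mul_norm_poleAt_radial hξn ht)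
  have htail := bweight_mul_norm_poleSeries_sub_le hξ (n + 1) hz
  have hsplit : poleTerm ξ n z = (poleSeries ξ z - polePartialSum ξ n z)
      - (poleSeries ξ z - polePartialSum ξ (n + 1) z) := by
    simp only [polePartialSum, Finset.sum_range_succ]; ring
  have hle : bweight z * ‖poleTerm ξ n z‖ ≤ bweight z * ‖poleSeries ξ z - polePartialSum ξ n z‖
      + bweight z * ‖poleSeries ξ z - polePartialSum ξ (n + 1) z‖ := by
    rw [hsplit, ← mul_add]
    exact mul_le_mul_of_nonneg_left (norm_sub_le _ _) (bweight_nonneg z)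
  linarith [hsmall hz, pow_succ (8 : ℝ)⁻¹ n]

end PoleSeriesVanishing

/-- For a strictly increasing sequence `Xₙ ⊊ Xₙ₊₁ ⊆ 𝕊` with union `X`,
the union `⋃ₙ B_♯^{Xₙ}(𝔻*)` is not closed in `B(𝔻*)` for `‖·‖_B`: there is a sequence
in the union converging in norm to some `φ ∈ B(𝔻*)` outside the union; in particular
this limit lies in `B_♯^X(𝔻*)`, so the union is strictly contained in `B_♯^X(𝔻*)`. -/
theorem union_B_sharp_not_closed (Xn : ℕ → Set ℂ) (hS : ∀ n, Xn n ⊆ unitCircle)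
    (hst : ∀ n, Xn n ⊂ Xn (n + 1)) :
    ∃ (φk : ℕ → ℂ → ℂ) (φ : ℂ → ℂ),
      (∀ k, MemB (φk k) ∧ ∃ n, BVanishRel (Xn n) (φk k)) ∧
      MemB φ ∧ BVanishRel (⋃ n, Xn n) φ ∧
      (∀ ε : ℝ, 0 < ε → ∃ N : ℕ, ∀ k ≥ N, ∀ z ∈ extDisk,
        bweight z * ‖φk k z - φ z‖ < ε) ∧
      ¬ ∃ n, BVanishRel (Xn n) φ := by
  choose ξ hξX hξnX using fun n => Set.exists_of_ssubset (hst n)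
  have hξn : ∀ n, ‖ξ n‖ = 1 := fun n => hS (n + 1) (hξX n)
  have hξ : ∀ n, ‖ξ n‖ ≤ 1 := fun n => (hξn n).le
  have hξmem : ∀ {m n}, m < n → ξ m ∈ Xn n := fun hmn =>
    monotone_nat_of_le_succ (fun n => (hst n).subset) hmn (hξX _)
  refine ⟨polePartialSum ξ, poleSeries ξ,
    fun k => ⟨memB_polePartialSum hξ k, k, bVanishRel_polePartialSum hξ fun _ => hξmem⟩,
    memB_poleSeries hξ, bVanishRel_poleSeries hξ fun m => Set.mem_iUnion.2 ⟨m + 1, hξX m⟩,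
    fun ε hε => exists_bweight_mul_norm_polePartialSum_sub_lt hξ hε, ?_⟩
  rintro ⟨n, hn⟩
  exact not_bVanishRel_poleSeries hξ (hξn n) (hξnX n) (fun _ => hξmem) hn
end
end
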